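/- Propagation of small residuals: let 𝐀 ∈ ℝ^{m×N} have full row rank, let 𝐄 ∈ S₊₊^N, Σ ∈ S₊₊^d, τ > 0, and 𝐐 ∈ ℝ^{N×d} with 𝐐ᵀ𝐐 = I_d, and set 𝐃 = 𝐐Σ⁻¹𝐐ᵀ + τ²·𝐄 and 𝐂 = τ²Σ + 𝐐ᵀ𝐄⁻¹𝐐. Then 𝐃 and 𝐂 are invertible, and for any u ∈ ℝ^m, v ∈ ℝ^d, b ∈ ℝ^m, c ∈ ℝ^N, if (p, d) is the residual defined by [[𝐀𝐄𝐀ᵀ, 𝐀𝐐], [𝐐ᵀ𝐀ᵀ, −τ²Σ]]·(u, v) − (b + τ²·𝐀𝐄c, τ²·𝐐ᵀc) = (p, d), then the vectors y = τ⁻²·u and x = 𝐄(𝐀ᵀu − τ²c) + 𝐐v satisfy [[−𝐃⁻¹, 𝐀ᵀ], [𝐀, 0]]·(x, y) − (c, b) = (τ⁻²·𝐄⁻¹𝐐𝐂⁻¹d, p). -/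

import Mathlib

open Matrix
open scoped Kronecker

noncomputable section

/-- Euclidean norm of a vector. -/
def vnorm {I : Type*} [Fintype I] (v : I → ℝ) : ℝ := Real.sqrt (∑ i, v i ^ 2)

/-- Frobenius norm of a matrix. -/
def frobNorm {I J : Type*} [Fintype I] [Fintype J] (A : Matrix I J ℝ) : ℝ :=
  Real.sqrt (∑ i, ∑ j, A i j ^ 2)

/-- Spectral norm (ℓ₂ operator norm) of a matrix. -/
def specNorm {I J : Type*} [Fintype I] [Fintype J] (A : Matrix I J ℝ) : ℝ :=
  sSup {c | ∃ v : J → ℝ, vnorm v ≤ 1 ∧ c = vnorm (A *ᵥ v)}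

/-- Largest (real) eigenvalue of a square matrix. -/
def lmax {I : Type*} [Fintype I] (A : Matrix I I ℝ) : ℝ :=
  sSup {t | ∃ v : I → ℝ, v ≠ 0 ∧ A *ᵥ v = t • v}

/-- Smallest (real) eigenvalue of a square matrix. -/
def lmin {I : Type*} [Fintype I] (A : Matrix I I ℝ) : ℝ :=
  sInf {t | ∃ v : I → ℝ, v ≠ 0 ∧ A *ᵥ v = t • v}

/-- Column-stacking vectorization `vec`: `vecM X (j, i) = X i j`. -/
def vecM {J : Type*} (X : Matrix J J ℝ) : J × J → ℝ := fun p => X p.2 p.1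

/-- `Ψ` is an orthonormal basis matrix for the space of vectorized symmetric matrices:
`ΨᵀΨ = I` and `ΨΨᵀ` is the orthogonal projection onto vectorized symmetric matrices. -/
def IsSymBasis {J K : Type*} [Fintype J] [Fintype K] [DecidableEq K]
    (Ψ : Matrix (J × J) K ℝ) : Prop :=
  Ψᵀ * Ψ = 1 ∧ ∀ X : Matrix J J ℝ, Ψ *ᵥ (Ψᵀ *ᵥ vecM X) = vecM ((1/2 : ℝ) • (X + Xᵀ))

/-- Symmetric vectorization with respect to the basis matrix `Ψ`. -/
def svec {J K : Type*} [Fintype J] (Ψ : Matrix (J × J) K ℝ) (X : Matrix J J ℝ) : K → ℝ :=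
  Ψᵀ *ᵥ vecM X

/-- Symmetric Kronecker product with respect to the basis matrices `Ψ₁, Ψ₂`. -/
def skron {J J' K K' : Type*} [Fintype J] [Fintype J']
    (Ψ₁ : Matrix (J × J) K ℝ) (Ψ₂ : Matrix (J' × J') K' ℝ)
    (A B : Matrix J J' ℝ) : Matrix K K' ℝ :=
  (1/2 : ℝ) • (Ψ₁ᵀ * ((A ⊗ₖ B + B ⊗ₖ A) * Ψ₂))

/-- Positive semidefinite square root (junk value `0` off the PSD cone). -/
def psqrt {J : Type*} [Fintype J] [DecidableEq J] (A : Matrix J J ℝ) : Matrix J J ℝ :=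
  @dite _ A.PosSemidef (Classical.dec _) (fun h => (h.1.eigenvectorUnitary : Matrix J J ℝ) *
    diagonal ((↑) ∘ (Real.sqrt ∘ h.1.eigenvalues)) * (star h.1.eigenvectorUnitary : Matrix J J ℝ)) (fun _ => 0)

/-- Condition number in spectral norm. -/
def condNum {J : Type*} [Fintype J] [DecidableEq J] (M : Matrix J J ℝ) : ℝ :=
  specNorm M * specNorm M⁻¹

/-- Assumption A1: `W` is the Nesterov--Todd scaling point of a well-centered
primal-dual pair `(X, S)` that is `O(μ)`-close to a strictly complementary solution. -/
def A1 {n : ℕ} (μ L δ χ₁ : ℝ) (W X S Xs Ss : Matrix (Fin n) (Fin n) ℝ) : Prop :=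
  X.PosDef ∧ S.PosDef ∧ Xs.PosSemidef ∧ Ss.PosSemidef ∧ Xs * Ss = 0 ∧
    (Xs + Ss - χ₁⁻¹ • (1 : Matrix (Fin n) (Fin n) ℝ)).PosSemidef ∧
    ((1 : Matrix (Fin n) (Fin n) ℝ) - (Xs + Ss)).PosSemidef ∧
    W = psqrt X * (psqrt (psqrt X * S * psqrt X))⁻¹ * psqrt X ∧
    specNorm ((1/μ) • (psqrt X * S * psqrt X) - 1) ≤ δ ∧
    specNorm (X - Xs) ≤ L * μ ∧ specNorm (S - Ss) ≤ L

/-- Lemma 5.1, propagation of small residuals. -/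
theorem stmt10 {m N d : ℕ}
    (A : Matrix (Fin m) (Fin N) ℝ) (hrank : A.rank = m)
    (E : Matrix (Fin N) (Fin N) ℝ) (hE : E.PosDef)
    (Sg : Matrix (Fin d) (Fin d) ℝ) (hSg : Sg.PosDef)
    (τ : ℝ) (hτ : 0 < τ)
    (bQ : Matrix (Fin N) (Fin d) ℝ) (hbQ : bQᵀ * bQ = 1)
    (D : Matrix (Fin N) (Fin N) ℝ) (hD : D = bQ * Sg⁻¹ * bQᵀ + τ ^ 2 • E)
    (C : Matrix (Fin d) (Fin d) ℝ) (hC : C = τ ^ 2 • Sg + bQᵀ * E⁻¹ * bQ)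
    (u b : Fin m → ℝ) (v : Fin d → ℝ) (c : Fin N → ℝ)
    (p : Fin m → ℝ) (dd : Fin d → ℝ)
    (hres : (Matrix.fromBlocks (A * E * Aᵀ) (A * bQ) (bQᵀ * Aᵀ) (-(τ ^ 2) • Sg)) *ᵥ
        Sum.elim u v -
        Sum.elim (b + τ ^ 2 • (A *ᵥ (E *ᵥ c))) (τ ^ 2 • (bQᵀ *ᵥ c)) = Sum.elim p dd)
    (x : Fin N → ℝ) (hx : x = E *ᵥ (Aᵀ *ᵥ u - τ ^ 2 • c) + bQ *ᵥ v)
    (y : Fin m → ℝ) (hy : y = (τ ^ 2)⁻¹ • u) :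
    IsUnit D ∧ IsUnit C ∧
      (Matrix.fromBlocks (-D⁻¹) Aᵀ A 0) *ᵥ Sum.elim x y - Sum.elim c b =
        Sum.elim ((τ ^ 2)⁻¹ • (E⁻¹ *ᵥ (bQ *ᵥ (C⁻¹ *ᵥ dd)))) p := by
  have hτ2 : (0:ℝ) < τ ^ 2 := by positivity
  have hτ2ne : (τ:ℝ) ^ 2 ≠ 0 := ne_of_gt hτ2
  have hEi : (E⁻¹).PosDef := hE.inv
  have hSgi : (Sg⁻¹).PosDef := hSg.inv
  have hE2 : (τ ^ 2 • E).PosDef := by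
    refine ⟨?_, fun z hz => ?_⟩
    · have hEt : Eᵀ = E := by simpa using hE.1.eq
      simp [Matrix.IsHermitian, Matrix.conjTranspose_smul, hEt]
    · exact (hE.smul hτ2).2 hz
  have hSg2 : (τ ^ 2 • Sg).PosDef := by
    refine ⟨?_, fun z hz => ?_⟩
    · have hSgt : Sgᵀ = Sg := by simpa using hSg.1.eq
      simp [Matrix.IsHermitian, Matrix.conjTranspose_smul, hSgt]
    · exact (hSg.smul hτ2).2 hz
  have hDpd : D.PosDef := by
    rw [hD, add_comm]
    refine hE2.add_posSemidef ?_
    have := hSgi.posSemidef.mul_mul_conjTranspose_same bQ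
    simpa [Matrix.conjTranspose_eq_transpose_of_trivial] using this
  have hCpd : C.PosDef := by
    rw [hC]
    refine hSg2.add_posSemidef ?_
    have := hEi.posSemidef.conjTranspose_mul_mul_same bQ
    simpa [Matrix.conjTranspose_eq_transpose_of_trivial] using this
  have hDu : IsUnit D := hDpd.isUnit
  have hCu : IsUnit C := hCpd.isUnit
  refine ⟨hDu, hCu, ?_⟩
  have hEdet : IsUnit E.det := (Matrix.isUnit_iff_isUnit_det E).1 hE.isUnit
  have hSgdet : IsUnit Sg.det := (Matrix.isUnit_iff_isUnit_det Sg).1 hSg.isUnit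
  have hDdet : IsUnit D.det := (Matrix.isUnit_iff_isUnit_det D).1 hDu
  have hCdet : IsUnit C.det := (Matrix.isUnit_iff_isUnit_det C).1 hCu
  -- component equations of the residual hypothesis
  have h1 : (A * E * Aᵀ) *ᵥ u + (A * bQ) *ᵥ v - (b + τ ^ 2 • (A *ᵥ (E *ᵥ c))) = p := by
    funext i
    have := congrFun hres (Sum.inl i)
    simpa [Matrix.fromBlocks_mulVec] using this
  have h2 : (bQᵀ * Aᵀ) *ᵥ u + ((-(τ ^ 2)) • Sg) *ᵥ v - τ ^ 2 • (bQᵀ *ᵥ c) = dd := by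
    funext i
    have := congrFun hres (Sum.inr i)
    simpa [Matrix.fromBlocks_mulVec] using this
  -- key matrix identity : D * E⁻¹ * bQ = bQ * Sg⁻¹ * C
  have hE1 : E * (E⁻¹ * bQ) = bQ := Matrix.mul_nonsing_inv_cancel_left _ _ hEdet
  have hSg1 : Sg⁻¹ * Sg = 1 := Matrix.nonsing_inv_mul _ hSgdet
  have hkey1 : D * (E⁻¹ * bQ) = bQ * (Sg⁻¹ * C) := by
    simp only [hD, hC, Matrix.add_mul, Matrix.mul_add, Matrix.smul_mul, Matrix.mul_smul,
      Matrix.mul_assoc, hE1, hSg1, Matrix.mul_one]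
    exact add_comm _ _
  have hkey : E⁻¹ * (bQ * C⁻¹) = D⁻¹ * (bQ * Sg⁻¹) := by
    have h3 : D * (E⁻¹ * (bQ * C⁻¹)) = bQ * Sg⁻¹ := by
      rw [show E⁻¹ * (bQ * C⁻¹) = E⁻¹ * bQ * C⁻¹ from (Matrix.mul_assoc _ _ _).symm,
        ← Matrix.mul_assoc D, hkey1, ← Matrix.mul_assoc,
        Matrix.mul_nonsing_inv_cancel_right _ _ hCdet]
    calc E⁻¹ * (bQ * C⁻¹) = D⁻¹ * (D * (E⁻¹ * (bQ * C⁻¹))) :=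
          (Matrix.nonsing_inv_mul_cancel_left _ _ hDdet).symm
      _ = D⁻¹ * (bQ * Sg⁻¹) := by rw [h3]
  -- rewrite the right-hand side of the top block
  have hrhs : (τ ^ 2)⁻¹ • (E⁻¹ *ᵥ (bQ *ᵥ (C⁻¹ *ᵥ dd))) =
      (τ ^ 2)⁻¹ • (D⁻¹ *ᵥ (bQ *ᵥ (Sg⁻¹ *ᵥ dd))) := by
    simp only [Matrix.mulVec_mulVec, ← Matrix.mul_assoc]
    rw [Matrix.mul_assoc E⁻¹ bQ C⁻¹, hkey, Matrix.mul_assoc]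
  -- the explicit formula for x
  have hSgv : Sg⁻¹ *ᵥ (Sg *ᵥ v) = v := by
    rw [Matrix.mulVec_mulVec, Matrix.nonsing_inv_mul _ hSgdet, Matrix.one_mulVec]
  have hxeq : x = D *ᵥ (Aᵀ *ᵥ y - c) - (τ ^ 2)⁻¹ • (bQ *ᵥ (Sg⁻¹ *ᵥ dd)) := by
    rw [hx, hy, hD, ← h2]
    simp only [Matrix.mulVec_add, Matrix.mulVec_sub, Matrix.mulVec_smul,
      Matrix.add_mulVec, Matrix.smul_mulVec, neg_smul, Matrix.neg_mulVec, Matrix.mulVec_neg,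
      ← Matrix.mulVec_mulVec, hSgv]
    match_scalars <;> field_simp <;> ring
  -- top block identity
  have htop : -(D⁻¹ *ᵥ x) + Aᵀ *ᵥ y - c =
      (τ ^ 2)⁻¹ • (E⁻¹ *ᵥ (bQ *ᵥ (C⁻¹ *ᵥ dd))) := by
    rw [hrhs, hxeq]
    rw [Matrix.mulVec_sub, Matrix.mulVec_mulVec, Matrix.nonsing_inv_mul _ hDdet,
      Matrix.one_mulVec, Matrix.mulVec_smul]
    module
  -- bottom block identity
  have hbot : A *ᵥ x - b = p := by
    rw [hx, ← h1]
    simp only [Matrix.mulVec_add, Matrix.mulVec_sub, Matrix.mulVec_smul,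
      ← Matrix.mulVec_mulVec, Matrix.mul_assoc]
    module
  funext i
  rcases i with i | i
  · have := congrFun htop i
    simpa [Matrix.fromBlocks_mulVec, Matrix.neg_mulVec, sub_eq_iff_eq_add] using this
  · have := congrFun hbot i
    simpa [Matrix.fromBlocks_mulVec] using this
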